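/- arXiv:1612.08850 — 6 statements merged into one kernel-verified Lean document; each statement's English description precedes it below -/
import Mathlib

section
/- Let η' := η^{m↔m̃} be the swap matching for distinct UEs m, m̃ with p := η m ≠ p̃ := η m̃. Then the sum of the two swapped UEs' utility changes satisfies (f η' m − f η m) + (f η' m̃ − f η m̃) = ∑_{z ∈ M with η z = p̃} (u z m − u z m̃) + ∑_{z ∈ M with η z = p} (u z m̃ − u z m) − 2·u m m̃. -/
open Finset

/-- The swap matching `η^{m ↔ m'}`: `m` and `m'` exchange serving nodes,
all other UEs keep their serving node. -/
def swapMatch {M P : Type*} [DecidableEq M] (η : M → P) (m m' : M) : M → P :=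
  fun z => if z = m then η m' else if z = m' then η m else η z

/-- Utility of UE `x` under matching `η`: sum of pairwise utilities with the
UEs assigned to the same serving node. -/
def ueUtil {M P : Type*} [Fintype M] [DecidableEq P]
    (u : M → M → ℝ) (η : M → P) (x : M) : ℝ :=
  ∑ z ∈ Finset.univ.filter (fun z => η z = η x), u z x

/-- Utility of SN `p` under matching `η`: sum of utilities of its associated UEs. -/
def snUtil {M P : Type*} [Fintype M] [DecidableEq P]
    (u : M → M → ℝ) (η : M → P) (p : P) : ℝ :=
  ∑ x ∈ Finset.univ.filter (fun x => η x = p), ueUtil u η x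

/-- Social welfare: sum of utilities of all UEs. -/
def welfare {M P : Type*} [Fintype M] [DecidableEq P]
    (u : M → M → ℝ) (η : M → P) : ℝ :=
  ∑ x : M, ueUtil u η x

/-- Two-sided pairwise stability: no pair of distinct UEs can swap so that all
four involved players weakly improve, with at least one strict improvement. -/
def TwoSidedStable {M P : Type*} [Fintype M] [DecidableEq M] [DecidableEq P]
    (u : M → M → ℝ) (η : M → P) : Prop :=
  ¬ ∃ m m' : M, m ≠ m' ∧
    ueUtil u (swapMatch η m m') m ≥ ueUtil u η m ∧
    ueUtil u (swapMatch η m m') m' ≥ ueUtil u η m' ∧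
    snUtil u (swapMatch η m m') (η m) ≥ snUtil u η (η m) ∧
    snUtil u (swapMatch η m m') (η m') ≥ snUtil u η (η m') ∧
    (ueUtil u (swapMatch η m m') m > ueUtil u η m ∨
     ueUtil u (swapMatch η m m') m' > ueUtil u η m' ∨
     snUtil u (swapMatch η m m') (η m) > snUtil u η (η m) ∨
     snUtil u (swapMatch η m m') (η m') > snUtil u η (η m'))

/-- the sum of the two swapped UEs' utility changes. -/
theorem swap_sum_of_changes {M P : Type*} [Fintype M] [DecidableEq M] [DecidableEq P]
    (u : M → M → ℝ) (hsymm : ∀ z y, u z y = u y z) (hdiag : ∀ z, u z z = 0)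
    (η : M → P) (m m' : M) (hne : m ≠ m') (hp : η m ≠ η m') :
    (ueUtil u (swapMatch η m m') m - ueUtil u η m) +
      (ueUtil u (swapMatch η m m') m' - ueUtil u η m') =
    (∑ z ∈ Finset.univ.filter (fun z => η z = η m'), (u z m - u z m')) +
      (∑ z ∈ Finset.univ.filter (fun z => η z = η m), (u z m' - u z m)) -
      2 * u m m' := by
  simp only [ueUtil, Finset.sum_filter]
  have H : ∑ z : M,
      ((if swapMatch η m m' z = swapMatch η m m' m then u z m else 0)
        - (if η z = η m then u z m else 0)
       + ((if swapMatch η m m' z = swapMatch η m m' m' then u z m' else 0)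
        - (if η z = η m' then u z m' else 0))
       - ((if η z = η m' then u z m - u z m' else 0)
        + (if η z = η m then u z m' - u z m else 0)))
      = ∑ z : M, ((if z = m then -(u m m') else 0) + (if z = m' then -(u m m') else 0)) := by
    refine Finset.sum_congr rfl fun z _ => ?_
    by_cases hz1 : z = m
    · subst hz1
      simp [swapMatch, hne, hne.symm, hp, hp.symm, hdiag, hsymm z m']
    · by_cases hz2 : z = m'
      · subst hz2
        simp [swapMatch, hne, hne.symm, hp, hp.symm, hdiag, hsymm z m]
      · by_cases h3 : η z = η m <;> by_cases h4 : η z = η m' <;>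
          simp_all [swapMatch] <;> ring
  have H2 : ∑ z : M, ((if z = m then -(u m m') else 0) + (if z = m' then -(u m m') else 0))
      = -(2 * u m m') := by
    rw [Finset.sum_add_distrib, Finset.sum_ite_eq', Finset.sum_ite_eq']
    simp; ring
  rw [H2] at H
  simp only [Finset.sum_sub_distrib, Finset.sum_add_distrib] at H
  linarith
end

section
/- Let η' := η^{m↔m̃} be the swap matching for distinct UEs m, m̃ with η m ≠ η m̃. Then the total change in social welfare equals twice the sum of the utility changes of the two swapped UEs: Γ η' − Γ η = 2·[(f η' m − f η m) + (f η' m̃ − f η m̃)] (the paper's identity Δ_M = 2δ, which uses the symmetry of the pairwise utilities). -/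
open Finset

/-- the total change in social welfare equals twice the sum of the
utility changes of the two swapped UEs (Δ_M = 2δ). -/
theorem swap_welfare_eq_two_delta {M P : Type*} [Fintype M] [DecidableEq M] [DecidableEq P]
    (u : M → M → ℝ) (hsymm : ∀ z y, u z y = u y z) (hdiag : ∀ z, u z z = 0)
    (η : M → P) (m m' : M) (hne : m ≠ m') (hp : η m ≠ η m') :
    welfare u (swapMatch η m m') - welfare u η =
      2 * ((ueUtil u (swapMatch η m m') m - ueUtil u η m) +
        (ueUtil u (swapMatch η m m') m' - ueUtil u η m')) := by
    classical
  set η' := swapMatch η m m' with hη'def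
  have hη'm : η' m = η m' := by simp [hη'def, swapMatch]
  have hη'm' : η' m' = η m := by simp [hη'def, swapMatch, hne.symm]
  have hη'z : ∀ z, z ≠ m → z ≠ m' → η' z = η z := by
    intro z h1 h2; simp [hη'def, swapMatch, h1, h2]
  set d : M → M → ℝ := fun x z =>
    (if η' z = η' x then u z x else 0) - (if η z = η x then u z x else 0) with hd
  have hue : ∀ (θ : M → P) (x : M), ueUtil u θ x = ∑ z, if θ z = θ x then u z x else 0 := by
    intro θ x; rw [ueUtil, Finset.sum_filter]
  have he : ∀ x, ueUtil u η' x - ueUtil u η x = ∑ z, d x z := by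
    intro x; rw [hue, hue, ← Finset.sum_sub_distrib]
  have hdsymm : ∀ x z, d x z = d z x := by
    intro x z
    have h1 : (η' z = η' x) = (η' x = η' z) := by simp [eq_comm]
    have h2 : (η z = η x) = (η x = η z) := by simp [eq_comm]
    simp only [hd, hsymm z x, h1, h2]
  have hdmm : d m m = 0 := by simp [hd, hdiag]
  have hdmm' : d m m' = 0 := by
    simp only [hd, hη'm, hη'm']
    rw [if_neg hp, if_neg (fun h => hp h.symm)]
    ring
  have hdm'm : d m' m = 0 := by rw [hdsymm, hdmm']
  have hdm'm' : d m' m' = 0 := by simp [hd, hdiag]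
  set pr : Finset M := {m, m'} with hpr
  have hzero : ∀ x z : M, x ∉ pr → z ∉ pr → d x z = 0 := by
    intro x z hx hz
    simp only [hpr, Finset.mem_insert, Finset.mem_singleton, not_or] at hx hz
    simp [hd, hη'z x hx.1 hx.2, hη'z z hz.1 hz.2]
  have hsplit : ∀ f : M → ℝ, (∑ x, f x) = (∑ x ∈ Finset.univ \ pr, f x) + (f m + f m') := by
    intro f
    rw [← Finset.sum_sdiff (Finset.subset_univ pr)]
    congr 1
    rw [hpr, Finset.sum_pair hne]
  have h1 : ∀ x ∈ Finset.univ \ pr, (∑ z, d x z) = d m x + d m' x := by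
    intro x hx
    rw [hsplit (d x)]
    rw [Finset.sum_eq_zero (fun z hz => hzero x z (Finset.mem_sdiff.mp hx).2 (Finset.mem_sdiff.mp hz).2)]
    rw [hdsymm x m, hdsymm x m']
    ring
  have h2 : (∑ x ∈ Finset.univ \ pr, d m x) = ∑ z, d m z := by
    rw [hsplit (d m), hdmm, hdmm']; ring
  have h3 : (∑ x ∈ Finset.univ \ pr, d m' x) = ∑ z, d m' z := by
    rw [hsplit (d m'), hdm'm, hdm'm']; ring
  have hw : welfare u η' - welfare u η = ∑ x, (∑ z, d x z) := by
    rw [welfare, welfare, ← Finset.sum_sub_distrib]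
    exact Finset.sum_congr rfl (fun x _ => he x)
  rw [hw, he m, he m']
  rw [hsplit (fun x => ∑ z, d x z)]
  rw [Finset.sum_congr rfl h1, Finset.sum_add_distrib, h2, h3]
  ring
end

section
/- Let η' := η^{m↔m̃} be the swap matching for distinct UEs m, m̃ with p := η m ≠ p̃ := η m̃. Then the change in social welfare is exactly the change in the utilities of the two serving nodes involved in the swap: Γ η' − Γ η = (g η' p − g η p) + (g η' p̃ − g η p̃). -/
open Finset

/-- the change in social welfare is exactly the change in the
utilities of the two serving nodes involved in the swap. -/
theorem swap_welfare_eq_sn_changes {M P : Type*} [Fintype M] [DecidableEq M] [DecidableEq P]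
    (u : M → M → ℝ) (hsymm : ∀ z y, u z y = u y z) (hdiag : ∀ z, u z z = 0)
    (η : M → P) (m m' : M) (hne : m ≠ m') (hp : η m ≠ η m') :
    welfare u (swapMatch η m m') - welfare u η =
      (snUtil u (swapMatch η m m') (η m) - snUtil u η (η m)) +
        (snUtil u (swapMatch η m m') (η m') - snUtil u η (η m')) := by
    classical
  set η' := swapMatch η m m' with hη'
  have hη'm : η' m = η m' := by simp [hη', swapMatch]
  have hη'm' : η' m' = η m := by simp [hη', swapMatch, hne, Ne.symm hne]
  have hη'z : ∀ z, z ≠ m → z ≠ m' → η' z = η z := by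
    intro z h1 h2; simp [hη', swapMatch, h1, h2]
  -- ueUtil unchanged for UEs outside the two clusters
  have hue : ∀ x, η x ≠ η m → η x ≠ η m' → ueUtil u η' x = ueUtil u η x := by
    intro x h1 h2
    have hxm : x ≠ m := fun h => h1 (by rw [h])
    have hxm' : x ≠ m' := fun h => h2 (by rw [h])
    unfold ueUtil
    apply Finset.sum_congr _ (fun _ _ => rfl)
    ext z
    simp only [Finset.mem_filter, Finset.mem_univ, true_and]
    rw [hη'z x hxm hxm']
    by_cases hz : z = m
    · subst hz; rw [hη'm]
      exact iff_of_false (fun h => h2 h.symm) (fun h => h1 h.symm)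
    by_cases hz' : z = m'
    · subst hz'; rw [hη'm']
      exact iff_of_false (fun h => h1 h.symm) (fun h => h2 h.symm)
    rw [hη'z z hz hz']
  -- union of the two fibers is preserved by the swap
  have hfib : Finset.univ.filter (fun x => η' x = η m ∨ η' x = η m')
      = Finset.univ.filter (fun x => η x = η m ∨ η x = η m') := by
    ext x
    simp only [Finset.mem_filter, Finset.mem_univ, true_and]
    by_cases hx : x = m
    · subst hx; rw [hη'm]; tauto
    by_cases hx' : x = m'
    · subst hx'; rw [hη'm']; tauto
    rw [hη'z x hx hx']
  have hdisj : ∀ ζ : M → P,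
      Disjoint (Finset.univ.filter (fun x => ζ x = η m))
        (Finset.univ.filter (fun x => ζ x = η m')) := by
    intro ζ
    rw [Finset.disjoint_filter]
    intro x _ h1 h2
    exact hp (h1 ▸ h2 ▸ rfl)
  have hsn : ∀ ζ : M → P,
      snUtil u ζ (η m) + snUtil u ζ (η m')
        = ∑ x ∈ Finset.univ.filter (fun x => ζ x = η m ∨ ζ x = η m'), ueUtil u ζ x := by
    intro ζ
    rw [Finset.filter_or, Finset.sum_union (hdisj ζ)]
    rfl
  have hw : ∀ ζ : M → P, welfare u ζ
      = (∑ x ∈ Finset.univ.filter (fun x => η x = η m ∨ η x = η m'), ueUtil u ζ x)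
        + ∑ x ∈ Finset.univ.filter (fun x => ¬(η x = η m ∨ η x = η m')), ueUtil u ζ x := by
    intro ζ
    exact (Finset.sum_filter_add_sum_filter_not _ _ _).symm
  have hcomp : ∑ x ∈ Finset.univ.filter (fun x => ¬(η x = η m ∨ η x = η m')), ueUtil u η' x
      = ∑ x ∈ Finset.univ.filter (fun x => ¬(η x = η m ∨ η x = η m')), ueUtil u η x := by
    apply Finset.sum_congr rfl
    intro x hx
    simp only [Finset.mem_filter, not_or] at hx
    exact hue x hx.2.1 hx.2.2
  have h1 := hsn η'
  rw [hfib] at h1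
  have h2 := hsn η
  rw [hw η', hw η, hcomp]
  linarith
end

section
/- (UE-side form of Lemma 1.) Let η' := η^{m↔m̃} be the swap matching for distinct UEs m, m̃ with η m ≠ η m̃. If the swap strictly increases the utility of m (f η' m > f η m) and does not decrease the utility of m̃ (f η' m̃ ≥ f η m̃), then the social welfare strictly increases: Γ η' > Γ η. -/
open Finset

/-- UE-side form of Lemma 1: if the swap strictly improves `m`
and does not hurt `m'`, the social welfare strictly increases. -/
theorem swap_welfare_increases_of_ue {M P : Type*} [Fintype M] [DecidableEq M] [DecidableEq P]
    (u : M → M → ℝ) (hsymm : ∀ z y, u z y = u y z) (hdiag : ∀ z, u z z = 0)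
    (η : M → P) (m m' : M) (hne : m ≠ m') (hp : η m ≠ η m')
    (h1 : ueUtil u (swapMatch η m m') m > ueUtil u η m)
    (h2 : ueUtil u (swapMatch η m m') m' ≥ ueUtil u η m') :
    welfare u (swapMatch η m m') > welfare u η := by
  classical
  set η' := swapMatch η m m' with hη'
  have hη'm : η' m = η m' := by simp [hη', swapMatch]
  have hη'm' : η' m' = η m := by simp [hη', swapMatch, hne, Ne.symm hne]
  have hη'z : ∀ z, z ≠ m → z ≠ m' → η' z = η z := by
    intro z h1 h2; simp [hη', swapMatch, h1, h2]
  set D : M → M → ℝ := fun z x =>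
    (if η' z = η' x then u z x else 0) - (if η z = η x then u z x else 0) with hD
  have hDsymm : ∀ z x, D z x = D x z := by
    intro z x
    simp only [hD, hsymm z x]
    refine congrArg₂ (· - ·) ?_ ?_ <;> exact if_congr eq_comm rfl rfl
  have hDzero : ∀ z x, z ≠ m → z ≠ m' → x ≠ m → x ≠ m' → D z x = 0 := by
    intro z x hz1 hz2 hx1 hx2
    simp [hD, hη'z z hz1 hz2, hη'z x hx1 hx2]
  have hDmm : D m m = 0 := by simp [hD, hdiag]
  have hDm'm' : D m' m' = 0 := by simp [hD, hdiag]
  have hDmm' : D m m' = 0 := by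
    simp [hD, hη'm, hη'm', hp, Ne.symm hp]
  have hDm'm : D m' m = 0 := by
    simp [hD, hη'm, hη'm', hp, Ne.symm hp]
  have hg : ∀ x, ueUtil u η' x - ueUtil u η x = ∑ z, D z x := by
    intro x
    simp only [ueUtil, Finset.sum_filter, hD, ← Finset.sum_sub_distrib]
  have hgm : (0:ℝ) < ∑ z, D z m := by rw [← hg]; linarith
  have hgm' : (0:ℝ) ≤ ∑ z, D z m' := by rw [← hg]; linarith
  have hT : welfare u η' - welfare u η = ∑ x, ∑ z, D z x := by
    simp only [welfare, ← Finset.sum_sub_distrib, hg]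
  -- sum over x outside {m, m'}
  have hdiff_mem : ∀ x ∈ Finset.univ \ ({m, m'} : Finset M), x ≠ m ∧ x ≠ m' := by
    intro x hx
    simp only [Finset.mem_sdiff, Finset.mem_insert, Finset.mem_singleton] at hx
    exact ⟨fun h => hx.2 (Or.inl h), fun h => hx.2 (Or.inr h)⟩
  have h4 : ∑ x ∈ Finset.univ \ ({m, m'} : Finset M), (∑ z, D z x)
      = ∑ x ∈ Finset.univ \ ({m, m'} : Finset M), (D m x + D m' x) := by
    refine Finset.sum_congr rfl fun x hx => ?_
    obtain ⟨hx1, hx2⟩ := hdiff_mem x hx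
    rw [← Finset.sum_pair (f := fun z => D z x) hne]
    refine (Finset.sum_subset (Finset.subset_univ _) fun z _ hz => ?_).symm
    simp only [Finset.mem_insert, Finset.mem_singleton] at hz
    push_neg at hz
    exact hDzero z x hz.1 hz.2 hx1 hx2
  have h5 : ∀ y : M, D m y = 0 → D m' y = 0 →
      ∑ x ∈ Finset.univ \ ({m, m'} : Finset M), D x y = ∑ z, D z y := by
    intro y hy1 hy2
    refine Finset.sum_subset (Finset.subset_univ _) fun x _ hx => ?_
    simp only [Finset.mem_sdiff, Finset.mem_univ, true_and, not_not,
      Finset.mem_insert, Finset.mem_singleton] at hx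
    rcases hx with rfl | rfl
    · exact hy1
    · exact hy2
  have h6 : ∑ x ∈ Finset.univ \ ({m, m'} : Finset M), (D m x + D m' x)
      = (∑ z, D z m) + (∑ z, D z m') := by
    rw [Finset.sum_add_distrib]
    congr 1
    · rw [← h5 m hDmm hDm'm]
      exact Finset.sum_congr rfl fun x _ => hDsymm m x
    · rw [← h5 m' hDmm' hDm'm']
      exact Finset.sum_congr rfl fun x _ => hDsymm m' x
  have h7 : ∑ x, (∑ z, D z x)
      = ∑ x ∈ Finset.univ \ ({m, m'} : Finset M), (∑ z, D z x)
        + ((∑ z, D z m) + (∑ z, D z m')) := by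
    rw [← Finset.sum_pair hne (f := fun x => ∑ z, D z x)]
    exact (Finset.sum_sdiff (Finset.subset_univ _)).symm
  have hkey : welfare u η' - welfare u η
      = 2 * (∑ z, D z m) + 2 * (∑ z, D z m') := by
    rw [hT, h7, h4, h6]; ring
  linarith
end

section
/- (Lemma 1.) Let η' := η^{m↔m̃} be the swap matching for distinct UEs m, m̃ with p := η m ≠ p̃ := η m̃. If the swap weakly improves the utility of every involved player, i.e. f η' m ≥ f η m, f η' m̃ ≥ f η m̃, g η' p ≥ g η p and g η' p̃ ≥ g η p̃, and at least one of these four inequalities is strict, then the social welfare strictly increases: Γ η' > Γ η. -/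
open Finset

/-- Lemma 1: if the swap weakly improves every involved player,
with at least one strict improvement, then the social welfare strictly increases. -/
theorem swap_welfare_increases {M P : Type*} [Fintype M] [DecidableEq M] [DecidableEq P]
    (u : M → M → ℝ) (hsymm : ∀ z y, u z y = u y z) (hdiag : ∀ z, u z z = 0)
    (η : M → P) (m m' : M) (hne : m ≠ m') (hp : η m ≠ η m')
    (h1 : ueUtil u (swapMatch η m m') m ≥ ueUtil u η m)
    (h2 : ueUtil u (swapMatch η m m') m' ≥ ueUtil u η m')
    (h3 : snUtil u (swapMatch η m m') (η m) ≥ snUtil u η (η m))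
    (h4 : snUtil u (swapMatch η m m') (η m') ≥ snUtil u η (η m'))
    (hstrict : ueUtil u (swapMatch η m m') m > ueUtil u η m ∨
      ueUtil u (swapMatch η m m') m' > ueUtil u η m' ∨
      snUtil u (swapMatch η m m') (η m) > snUtil u η (η m) ∨
      snUtil u (swapMatch η m m') (η m') > snUtil u η (η m')) :
    welfare u (swapMatch η m m') > welfare u η := by
  classical
  set η' : M → P := swapMatch η m m' with hη'def
  have hm : η' m = η m' := by simp [hη'def, swapMatch]
  have hm' : η' m' = η m := by simp [hη'def, swapMatch, hne.symm]
  have hz : ∀ z, z ≠ m → z ≠ m' → η' z = η z := by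
    intro z hz1 hz2; simp [hη'def, swapMatch, hz1, hz2]
  -- untouched clusters: set equality
  have hAsets : Finset.univ.filter (fun x => ¬(η' x = η m ∨ η' x = η m')) =
      Finset.univ.filter (fun x => ¬(η x = η m ∨ η x = η m')) := by
    apply Finset.filter_congr
    intro x _
    by_cases hx : x = m
    · subst hx; simp [hm]
    · by_cases hx' : x = m'
      · subst hx'; simp [hm']
      · rw [hz x hx hx']
  -- utility unchanged on untouched clusters
  have hfeq : ∀ x, ¬(η x = η m ∨ η x = η m') → ueUtil u η' x = ueUtil u η x := by
    intro x hx
    push_neg at hx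
    have hxm : x ≠ m := fun h => hx.1 (by rw [h])
    have hxm' : x ≠ m' := fun h => hx.2 (by rw [h])
    unfold ueUtil
    rw [hz x hxm hxm']
    apply Finset.sum_congr _ (fun _ _ => rfl)
    apply Finset.filter_congr
    intro z _
    by_cases hzm : z = m
    · subst hzm; rw [hm]
      exact iff_of_false (fun h => hx.2 h.symm) (fun h => hx.1 h.symm)
    · by_cases hzm' : z = m'
      · subst hzm'; rw [hm']
        exact iff_of_false (fun h => hx.1 h.symm) (fun h => hx.2 h.symm)
      · rw [hz z hzm hzm']
  -- welfare splits into two clusters plus the rest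
  have hsplit : ∀ ζ : M → P, welfare u ζ =
      snUtil u ζ (η m) + snUtil u ζ (η m') +
      ∑ x ∈ Finset.univ.filter (fun x => ¬(ζ x = η m ∨ ζ x = η m')), ueUtil u ζ x := by
    intro ζ
    unfold welfare
    rw [← Finset.sum_filter_add_sum_filter_not Finset.univ (fun x => ζ x = η m ∨ ζ x = η m')]
    congr 1
    rw [Finset.filter_or, Finset.sum_union]
    · rfl
    · rw [Finset.disjoint_filter]
      intro x _ ha hb
      exact hp (ha ▸ hb ▸ rfl)
  have hA : welfare u η' - welfare u η =
      (snUtil u η' (η m) - snUtil u η (η m)) + (snUtil u η' (η m') - snUtil u η (η m')) := by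
    have e1 := hsplit η'
    have e2 := hsplit η
    rw [hAsets] at e1
    have e3 : ∑ x ∈ Finset.univ.filter (fun x => ¬(η x = η m ∨ η x = η m')), ueUtil u η' x =
        ∑ x ∈ Finset.univ.filter (fun x => ¬(η x = η m ∨ η x = η m')), ueUtil u η x :=
      Finset.sum_congr rfl (fun x hx => hfeq x (by simpa using hx))
    rw [e3] at e1
    linarith
  -- identity B
  set D : M → M → ℝ := fun x z =>
    (if η' z = η' x then u z x else 0) - (if η z = η x then u z x else 0) with hDdef
  have hue : ∀ (ζ : M → P) (x : M), ueUtil u ζ x = ∑ z, if ζ z = ζ x then u z x else 0 := by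
    intro ζ x; rw [ueUtil, Finset.sum_filter]
  have hrow : ∀ x, ∑ z, D x z = ueUtil u η' x - ueUtil u η x := by
    intro x
    rw [hue, hue, ← Finset.sum_sub_distrib]
  have hDzero : ∀ x z, x ≠ m → x ≠ m' → z ≠ m → z ≠ m' → D x z = 0 := by
    intro x z hx1 hx2 hz1 hz2
    simp only [hDdef, hz x hx1 hx2, hz z hz1 hz2, sub_self]
  have hDsymm : ∀ x z, D x z = D z x := by
    intro x z
    simp only [hDdef, hsymm z x]
    congr 1 <;> [skip; skip] <;> apply if_congr _ rfl rfl <;> exact eq_comm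
  have hDmm : D m m = 0 := by simp [hDdef, hdiag]
  have hDm'm' : D m' m' = 0 := by simp [hDdef, hdiag]
  have hDmm' : D m m' = 0 := by
    have c1 : ¬(η' m' = η' m) := by rw [hm, hm']; exact hp
    have c2 : ¬(η m' = η m) := fun h => hp h.symm
    simp only [hDdef, if_neg c1, if_neg c2, sub_self]
  have hDm'm : D m' m = 0 := by rw [hDsymm]; exact hDmm'
  have hTot : ∀ F : M → ℝ, ∑ x, F x = F m + F m' + ∑ x ∈ Finset.univ \ {m, m'}, F x := by
    intro F
    rw [← Finset.sum_sdiff (Finset.subset_univ {m, m'}), Finset.sum_pair hne]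
    ring
  have hrow2 : ∀ x, x ∈ Finset.univ \ ({m, m'} : Finset M) → ∑ z, D x z = D x m + D x m' := by
    intro x hx
    simp only [Finset.mem_sdiff, Finset.mem_insert, Finset.mem_singleton] at hx
    rw [show D x m + D x m' = ∑ z ∈ ({m, m'} : Finset M), D x z from (Finset.sum_pair hne).symm]
    apply Eq.symm
    apply Finset.sum_subset (Finset.subset_univ {m, m'})
    intro z _ hzmem
    simp only [Finset.mem_insert, Finset.mem_singleton] at hzmem
    push_neg at hzmem
    exact hDzero x z (fun h => hx.2 (Or.inl h)) (fun h => hx.2 (Or.inr h)) hzmem.1 hzmem.2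
  have hwelf : welfare u η' - welfare u η = ∑ x, ∑ z, D x z := by
    unfold welfare
    rw [← Finset.sum_sub_distrib]
    exact (Finset.sum_congr rfl (fun x _ => (hrow x).symm))
  have hB : welfare u η' - welfare u η =
      2 * ((ueUtil u η' m - ueUtil u η m) + (ueUtil u η' m' - ueUtil u η m')) := by
    rw [hwelf, hTot (fun x => ∑ z, D x z)]
    have hr : ∑ x ∈ Finset.univ \ ({m, m'} : Finset M), (∑ z, D x z) =
        (∑ x ∈ Finset.univ \ ({m, m'} : Finset M), D x m) +
        (∑ x ∈ Finset.univ \ ({m, m'} : Finset M), D x m') := by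
      rw [← Finset.sum_add_distrib]
      exact Finset.sum_congr rfl hrow2
    have hcm : ∑ x ∈ Finset.univ \ ({m, m'} : Finset M), D x m =
        ueUtil u η' m - ueUtil u η m := by
      have := hTot (fun x => D m x)
      rw [hrow m] at this
      have hsymms : ∑ x ∈ Finset.univ \ ({m, m'} : Finset M), D x m =
          ∑ x ∈ Finset.univ \ ({m, m'} : Finset M), D m x :=
        Finset.sum_congr rfl (fun x _ => hDsymm x m)
      rw [hsymms]
      simp only [hDmm, hDmm'] at this
      linarith
    have hcm' : ∑ x ∈ Finset.univ \ ({m, m'} : Finset M), D x m' =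
        ueUtil u η' m' - ueUtil u η m' := by
      have := hTot (fun x => D m' x)
      rw [hrow m'] at this
      have hsymms : ∑ x ∈ Finset.univ \ ({m, m'} : Finset M), D x m' =
          ∑ x ∈ Finset.univ \ ({m, m'} : Finset M), D m' x :=
        Finset.sum_congr rfl (fun x _ => hDsymm x m')
      rw [hsymms]
      simp only [hDm'm', hDm'm] at this
      linarith
    rw [hr, hcm, hcm', hrow m, hrow m']
    ring
  rcases hstrict with h | h | h | h
  · linarith
  · linarith
  · linarith
  · linarith
end

section
/- (Theorem 1.) If a matching η is a local maximum of the social welfare with respect to swaps, i.e. Γ(η^{m↔m̃}) ≤ Γ(η) for every pair of distinct UEs m, m̃, then η is two-sided pairwise stable. -/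
open Finset

/- A swap only moves `m` and `m'` between the cells of `p = η m` and `p' = η m'`, so the welfare
changes exactly by the changes of the SN utilities of `p` and `p'`.  For a symmetric kernel with
zero diagonal, adding a UE to a cell raises the cell's total utility by twice the newcomer's
utility inside it; replacing `m` by `m'` therefore changes the SN utility of `p` by
`2 (f' m' - f m)` and that of `p'` by `2 (f' m - f m')`.  Hence
`Γ' - Γ = Δg p + Δg p' = 2 (Δf m + Δf m')`, and if `Γ' ≤ Γ` while all four changes are
nonnegative, they all vanish. -/

def groupUtil {M : Type*} (u : M → M → ℝ) (A : Finset M) : ℝ :=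
  ∑ x ∈ A, ∑ z ∈ A, u z x

theorem groupUtil_insert {M : Type*} [DecidableEq M] {u : M → M → ℝ}
    (hsymm : ∀ z y, u z y = u y z) (hdiag : ∀ z, u z z = 0) {B : Finset M} {b : M}
    (hb : b ∉ B) :
    groupUtil u (insert b B) = groupUtil u B + 2 * ∑ z ∈ B, u z b := by
  simp only [groupUtil, sum_insert hb, hdiag, zero_add, sum_add_distrib]
  rw [sum_congr rfl fun x _ => hsymm b x]
  ring

section Matching

variable {M P : Type*}

theorem snUtil_eq_groupUtil [Fintype M] [DecidableEq P] (u : M → M → ℝ) (η : M → P) (p : P) :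
    snUtil u η p = groupUtil u (univ.filter (fun x => η x = p)) := by
  refine sum_congr rfl fun x hx => ?_
  rw [ueUtil, (mem_filter.mp hx).2]

theorem swapMatch_eq_comp [DecidableEq M] (η : M → P) (m m' : M) :
    swapMatch η m m' = η ∘ Equiv.swap m m' := by
  funext z
  simp only [swapMatch, Function.comp_apply, Equiv.swap_apply_def]
  split_ifs <;> rfl

theorem swapMatch_comm [DecidableEq M] (η : M → P) (m m' : M) :
    swapMatch η m m' = swapMatch η m' m := by
  rw [swapMatch_eq_comp, swapMatch_eq_comp, Equiv.swap_comm]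

theorem swapMatch_of_eq [DecidableEq M] {η : M → P} {m m' : M} (h : η m = η m') :
    swapMatch η m m' = η := by
  funext z
  unfold swapMatch
  split_ifs <;> subst_vars <;> simp [h]

theorem image_swapMatch [Fintype M] [DecidableEq M] [DecidableEq P] (η : M → P) (m m' : M) :
    univ.image (swapMatch η m m') = univ.image η := by
  rw [swapMatch_eq_comp, ← image_image, image_univ_equiv]

theorem filter_swapMatch_eq_of_ne [Fintype M] [DecidableEq M] [DecidableEq P] {η : M → P}
    {m m' : M} {q : P} (hm : q ≠ η m) (hm' : q ≠ η m') :
    univ.filter (fun x => swapMatch η m m' x = q) = univ.filter (fun x => η x = q) := by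
  ext x
  simp only [mem_filter, mem_univ, true_and]
  unfold swapMatch
  split_ifs <;> subst_vars <;> simp [*, Ne.symm hm, Ne.symm hm']

theorem filter_swapMatch_eq_left [Fintype M] [DecidableEq M] [DecidableEq P] {η : M → P}
    {m m' : M} (h : η m ≠ η m') :
    univ.filter (fun x => swapMatch η m m' x = η m)
      = insert m' ((univ.filter (fun x => η x = η m)).erase m) := by
  ext x
  simp only [mem_filter, mem_univ, true_and, mem_insert, mem_erase]
  unfold swapMatch
  split_ifs <;> subst_vars <;> simp [*, Ne.symm h]
  rintro rfl
  exact h rfl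

theorem welfare_eq_sum_snUtil [Fintype M] [DecidableEq P] (u : M → M → ℝ) (η : M → P) :
    welfare u η = ∑ p ∈ univ.image η, snUtil u η p :=
  (sum_fiberwise_of_maps_to (fun x _ => mem_image_of_mem η (mem_univ x)) _).symm

theorem snUtil_swapMatch_sub [Fintype M] [DecidableEq M] [DecidableEq P] {u : M → M → ℝ}
    (hsymm : ∀ z y, u z y = u y z) (hdiag : ∀ z, u z z = 0) {η : M → P} {m m' : M}
    (h : η m ≠ η m') :
    snUtil u (swapMatch η m m') (η m) - snUtil u η (η m)
      = 2 * (ueUtil u (swapMatch η m m') m' - ueUtil u η m) := by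
  have hswap : swapMatch η m m' m' = η m := by
    simp [swapMatch, (ne_of_apply_ne η h).symm]
  rw [snUtil_eq_groupUtil, snUtil_eq_groupUtil, ueUtil, ueUtil, hswap,
    filter_swapMatch_eq_left h]
  set B := (univ.filter (fun x => η x = η m)).erase m
  have hmB : m ∉ B := notMem_erase m _
  have hm'B : m' ∉ B := fun hx => h (mem_filter.mp (mem_of_mem_erase hx)).2.symm
  have hcell : univ.filter (fun x => η x = η m) = insert m B := (insert_erase (by simp)).symm
  rw [hcell, groupUtil_insert hsymm hdiag hmB,
    groupUtil_insert hsymm hdiag hm'B, sum_insert hmB, sum_insert hm'B, hdiag, hdiag]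
  ring

theorem welfare_swapMatch_sub [Fintype M] [DecidableEq M] [DecidableEq P] (u : M → M → ℝ)
    {η : M → P} {m m' : M} (h : η m ≠ η m') :
    welfare u (swapMatch η m m') - welfare u η
      = (snUtil u (swapMatch η m m') (η m) - snUtil u η (η m))
        + (snUtil u (swapMatch η m m') (η m') - snUtil u η (η m')) := by
  rw [welfare_eq_sum_snUtil, welfare_eq_sum_snUtil, image_swapMatch, ← sum_sub_distrib]
  refine sum_eq_add _ _ h (fun q _ hq => ?_) (fun hm => absurd (mem_image_of_mem η (mem_univ m)) hm)
    (fun hm' => absurd (mem_image_of_mem η (mem_univ m')) hm')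
  rw [snUtil_eq_groupUtil, snUtil_eq_groupUtil, filter_swapMatch_eq_of_ne hq.1 hq.2, sub_self]

end Matching

/-- Theorem 1: all local maxima of the social welfare with respect
to swaps are two-sided pairwise stable. -/
theorem localMax_twoSidedStable {M P : Type*} [Fintype M] [DecidableEq M] [DecidableEq P]
    (u : M → M → ℝ) (hsymm : ∀ z y, u z y = u y z) (hdiag : ∀ z, u z z = 0)
    (η : M → P)
    (hmax : ∀ m m' : M, m ≠ m' → welfare u (swapMatch η m m') ≤ welfare u η) :
    TwoSidedStable u η := by
  rintro ⟨m, m', hne, hf, hf', hg, hg', hstrict⟩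
  by_cases h : η m = η m'
  · rw [swapMatch_of_eq h] at hstrict
    rcases hstrict with hlt | hlt | hlt | hlt <;> exact lt_irrefl _ hlt
  have hgm := snUtil_swapMatch_sub hsymm hdiag h
  have hgm' := snUtil_swapMatch_sub hsymm hdiag (Ne.symm h)
  rw [← swapMatch_comm] at hgm'
  have hΓ := welfare_swapMatch_sub u h
  have hmax := hmax m m' hne
  rcases hstrict with hlt | hlt | hlt | hlt <;> linarith
end
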